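/- arXiv:2205.12947 — 5 statements merged into one kernel-verified Lean document; each statement's English description precedes it below -/
import Mathlib

section
/- The Milnor number of the loop polynomial w = x^p y + x y^q is pq; that is, the complex vector space ℂ[x,y]/(∂w/∂x, ∂w/∂y) has dimension pq. -/
/-!
In the Milnor algebra `x ∂ₓw - p y ∂ᵧw = (1 - pq) x y^q`, so `x y^q = 0` and then
`x^p y = 0`. With `y^q = -p x^(p-1) y` and `x^p = -q x y^(q-1)` this reduces every monomial
to a combination of the `pq` monomials `x^i y^j`, `i < p`, `j < q`. Conversely, these
reduction rules define a linear normal form `K[x,y] → K^(p×q)` on monomials; it kills all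
monomial multiples of `∂ₓw` and `∂ᵧw`, hence factors through the Milnor algebra and sends
the `x^i y^j` to the standard basis, so they are linearly independent.
-/

open MvPolynomial

namespace MvPolynomial

theorem monomial_eq_C_mul_X_pow_mul_X_pow {R : Type*} [CommSemiring R] (s : Fin 2 →₀ ℕ)
    (c : R) : monomial s c = C c * (X 0 ^ s 0 * X 1 ^ s 1) := by
  rw [monomial_eq, Finsupp.prod_fintype _ _ fun _ => pow_zero _, Fin.prod_univ_two]

theorem linearMap_mul_eq_zero_of_monomial_mul {R σ M : Type*} [CommSemiring R] [AddCommMonoid M]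
    [Module R M] (φ : MvPolynomial σ R →ₗ[R] M) {f : MvPolynomial σ R}
    (hf : ∀ s, φ (monomial s 1 * f) = 0) (g : MvPolynomial σ R) : φ (g * f) = 0 := by
  induction g using MvPolynomial.induction_on' with
  | monomial s c =>
    rw [show monomial s c = c • monomial s 1 by rw [smul_monomial, smul_eq_mul, mul_one],
      smul_mul_assoc, map_smul, hf, smul_zero]
  | add g₁ g₂ h₁ h₂ => rw [add_mul, map_add, h₁, h₂, add_zero]

end MvPolynomial

namespace LoopPolynomial

/-- `(x, y)` is a critical point of the loop polynomial `x^p y + x y^q`. -/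
structure IsCritical {A : Type*} [CommRing A] (p q : ℕ) (x y : A) : Prop where
  dx_eq_zero : (p : A) * x ^ (p - 1) * y + y ^ q = 0
  dy_eq_zero : x ^ p + (q : A) * x * y ^ (q - 1) = 0

def rectMonomial {A : Type*} [CommRing A] (p q : ℕ) (x y : A) (ij : Fin p × Fin q) : A :=
  x ^ (ij.1 : ℕ) * y ^ (ij.2 : ℕ)

namespace IsCritical

variable {A : Type*} [CommRing A] {p q : ℕ} {x y : A}

theorem x_mul_y_pow_eq_zero (h : IsCritical p q x y) (hp : 1 ≤ p) (hq : 1 ≤ q)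
    (hpq : IsUnit (1 - p * q : A)) : x * y ^ q = 0 := by
  obtain ⟨p, rfl⟩ : ∃ k, p = k + 1 := ⟨p - 1, by omega⟩
  obtain ⟨q, rfl⟩ : ∃ k, q = k + 1 := ⟨q - 1, by omega⟩
  have hdx := h.dx_eq_zero
  have hdy := h.dy_eq_zero
  simp only [Nat.add_sub_cancel] at hdx hdy
  refine hpq.mul_right_eq_zero.mp ?_
  linear_combination x * hdx - ((p + 1 : ℕ) : A) * y * hdy

theorem x_pow_mul_y_eq_zero (h : IsCritical p q x y) (hp : 1 ≤ p) (hq : 1 ≤ q)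
    (hpq : IsUnit (1 - p * q : A)) : x ^ p * y = 0 := by
  obtain ⟨q', rfl⟩ : ∃ k, q = k + 1 := ⟨q - 1, by omega⟩
  have hdy := h.dy_eq_zero
  simp only [Nat.add_sub_cancel] at hdy
  linear_combination y * hdy - ((q' + 1 : ℕ) : A) * h.x_mul_y_pow_eq_zero hp hq hpq

theorem x_pow_add_eq (h : IsCritical p q x y) (a : ℕ) :
    x ^ (a + p) = -(q : A) * (x ^ (a + 1) * y ^ (q - 1)) := by
  linear_combination x ^ a * h.dy_eq_zero

theorem y_pow_add_eq (h : IsCritical p q x y) (b : ℕ) :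
    y ^ (b + q) = -(p : A) * (x ^ (p - 1) * y ^ (b + 1)) := by
  linear_combination y ^ b * h.dx_eq_zero

theorem pow_mul_pow_mem_span {R : Type*} [CommRing R] [Algebra R A] (h : IsCritical p q x y)
    (hp : 2 ≤ p) (hq : 2 ≤ q) (hpq : IsUnit (1 - p * q : A)) (a b : ℕ) :
    x ^ a * y ^ b ∈ Submodule.span R (Set.range (rectMonomial p q x y)) := by
  set W := Submodule.span R (Set.range (rectMonomial p q x y))
  have mem_of_lt : ∀ {a b}, a < p → b < q → x ^ a * y ^ b ∈ W :=
    fun ha hb => Submodule.subset_span ⟨(⟨_, ha⟩, ⟨_, hb⟩), rfl⟩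
  have neg_cast_mul_mem : ∀ (n : ℕ) {m : A}, m ∈ W → -(n : A) * m ∈ W := fun n m hm => by
    rw [neg_mul, ← nsmul_eq_mul]
    exact W.neg_mem (W.nsmul_mem hm n)
  have mem_of_pos : ∀ {a b}, 1 ≤ a → 1 ≤ b → x ^ a * y ^ b ∈ W := by
    intro a b ha hb
    by_cases hab : a < p ∧ b < q
    · exact mem_of_lt hab.1 hab.2
    suffices x ^ a * y ^ b = 0 from this ▸ W.zero_mem
    rcases not_and_or.mp hab with ha' | hb'
    · exact zero_dvd_iff.mp (h.x_pow_mul_y_eq_zero (by omega) (by omega) hpq ▸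
        mul_dvd_mul (pow_dvd_pow x (not_lt.mp ha')) (dvd_pow_self y (by omega)))
    · exact zero_dvd_iff.mp (h.x_mul_y_pow_eq_zero (by omega) (by omega) hpq ▸
        mul_dvd_mul (dvd_pow_self x (by omega)) (pow_dvd_pow y (not_lt.mp hb')))
  by_cases hab : a < p ∧ b < q
  · exact mem_of_lt hab.1 hab.2
  rcases Nat.eq_zero_or_pos b with rfl | hb
  · obtain ⟨a, rfl⟩ : ∃ k, a = k + p := ⟨a - p, by omega⟩
    rw [pow_zero, mul_one, h.x_pow_add_eq]
    exact neg_cast_mul_mem q (mem_of_pos (by omega) (by omega))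
  rcases Nat.eq_zero_or_pos a with rfl | ha
  · obtain ⟨b, rfl⟩ : ∃ k, b = k + q := ⟨b - q, by omega⟩
    rw [pow_zero, one_mul, h.y_pow_add_eq]
    exact neg_cast_mul_mem p (mem_of_pos (by omega) (by omega))
  exact mem_of_pos ha hb

end IsCritical

section Polynomial

variable (R : Type*) [CommRing R] {p q : ℕ}

noncomputable def partialX (p q : ℕ) : MvPolynomial (Fin 2) R :=
  (p : MvPolynomial (Fin 2) R) * X 0 ^ (p - 1) * X 1 + X 1 ^ q

noncomputable def partialY (p q : ℕ) : MvPolynomial (Fin 2) R :=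
  X 0 ^ p + (q : MvPolynomial (Fin 2) R) * X 0 * X 1 ^ (q - 1)

noncomputable def jacobianIdeal (p q : ℕ) : Ideal (MvPolynomial (Fin 2) R) :=
  Ideal.span {partialX R p q, partialY R p q}

theorem isCritical_mk :
    IsCritical p q (Ideal.Quotient.mk (jacobianIdeal R p q) (X 0))
      (Ideal.Quotient.mk (jacobianIdeal R p q) (X 1)) where
  dx_eq_zero := by
    have h : Ideal.Quotient.mk (jacobianIdeal R p q) (partialX R p q) = 0 :=
      Ideal.Quotient.eq_zero_iff_mem.mpr (Ideal.subset_span (Set.mem_insert _ _))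
    simpa only [partialX, map_add, map_mul, map_pow, map_natCast] using h
  dy_eq_zero := by
    have h : Ideal.Quotient.mk (jacobianIdeal R p q) (partialY R p q) = 0 :=
      Ideal.Quotient.eq_zero_iff_mem.mpr (Ideal.subset_span (Set.mem_insert_of_mem _ rfl))
    simpa only [partialY, map_add, map_mul, map_pow, map_natCast] using h

theorem span_rectMonomial_eq_top (hp : 2 ≤ p) (hq : 2 ≤ q) (hpq : IsUnit (1 - p * q : R)) :
    Submodule.span R (Set.range (rectMonomial p q (Ideal.Quotient.mk (jacobianIdeal R p q) (X 0))
      (Ideal.Quotient.mk (jacobianIdeal R p q) (X 1)))) = ⊤ := by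
  have hpq' : IsUnit (1 - p * q : MvPolynomial (Fin 2) R ⧸ jacobianIdeal R p q) := by
    simpa using hpq.map (algebraMap R (MvPolynomial (Fin 2) R ⧸ jacobianIdeal R p q))
  refine eq_top_iff.mpr ?_
  rintro z -
  obtain ⟨g, rfl⟩ := Ideal.Quotient.mk_surjective z
  induction g using MvPolynomial.induction_on' with
  | monomial s c =>
    rw [monomial_eq_C_mul_X_pow_mul_X_pow, ← smul_eq_C_mul, ← Ideal.Quotient.mkₐ_eq_mk R,
      map_smul, map_mul, map_pow, map_pow]
    exact Submodule.smul_mem _ c ((isCritical_mk R).pow_mul_pow_mem_span hp hq hpq' _ _)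
  | add g₁ g₂ h₁ h₂ =>
    rw [map_add]
    exact Submodule.add_mem _ h₁ h₂

def rectSingle (p q a b : ℕ) : Fin p × Fin q → R :=
  if h : a < p ∧ b < q then Pi.single (⟨a, h.1⟩, ⟨b, h.2⟩) 1 else 0

/-- The reduction of `x^a y^b`; `rectSingle` is `0` outside the rectangle, which encodes
`x y^q = x^p y = 0`. -/
def normalForm (p q a b : ℕ) : Fin p × Fin q → R :=
  if b = 0 ∧ p ≤ a then -(q : R) • rectSingle R p q (a - p + 1) (q - 1)
  else if a = 0 ∧ q ≤ b then -(p : R) • rectSingle R p q (p - 1) (b - q + 1)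
  else rectSingle R p q a b

variable {R}

theorem rectSingle_of_not_lt {a b : ℕ} (h : ¬(a < p ∧ b < q)) : rectSingle R p q a b = 0 :=
  dif_neg h

theorem normalForm_coe (ij : Fin p × Fin q) : normalForm R p q ij.1 ij.2 = Pi.single ij 1 := by
  rw [normalForm, if_neg (by omega), if_neg (by omega), rectSingle, dif_pos ⟨ij.1.2, ij.2.2⟩]

theorem normalForm_of_pos {a b : ℕ} (ha : 1 ≤ a) (hb : 1 ≤ b) :
    normalForm R p q a b = rectSingle R p q a b := by
  rw [normalForm, if_neg (by omega), if_neg (by omega)]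

theorem normalForm_zero_left (hq : 1 ≤ q) {b : ℕ} (hb : q ≤ b) :
    normalForm R p q 0 b = -(p : R) • rectSingle R p q (p - 1) (b - q + 1) := by
  rw [normalForm, if_neg (by omega), if_pos ⟨rfl, hb⟩]

theorem normalForm_zero_right {a : ℕ} (ha : p ≤ a) :
    normalForm R p q a 0 = -(q : R) • rectSingle R p q (a - p + 1) (q - 1) := by
  rw [normalForm, if_pos ⟨rfl, ha⟩]

theorem normalForm_dx (hp : 2 ≤ p) (hq : 2 ≤ q) (a b : ℕ) :
    (p : R) • normalForm R p q (a + (p - 1)) (b + 1) + normalForm R p q a (b + q) = 0 := by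
  rw [normalForm_of_pos (by omega) (by omega)]
  rcases Nat.eq_zero_or_pos a with rfl | ha
  · rw [normalForm_zero_left (by omega) (by omega), zero_add, Nat.add_sub_cancel, neg_smul,
      add_neg_cancel]
  · rw [normalForm_of_pos ha (by omega), rectSingle_of_not_lt (by omega),
      rectSingle_of_not_lt (by omega), smul_zero, add_zero]

theorem normalForm_dy (hp : 2 ≤ p) (hq : 2 ≤ q) (a b : ℕ) :
    normalForm R p q (a + p) b + (q : R) • normalForm R p q (a + 1) (b + (q - 1)) = 0 := by
  rw [normalForm_of_pos (a := a + 1) (by omega) (by omega)]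
  rcases Nat.eq_zero_or_pos b with rfl | hb
  · rw [normalForm_zero_right (by omega), zero_add, Nat.add_sub_cancel, neg_smul,
      neg_add_cancel]
  · rw [normalForm_of_pos (by omega) hb, rectSingle_of_not_lt (by omega),
      rectSingle_of_not_lt (by omega), smul_zero, add_zero]

variable (R p q) in
noncomputable def normalFormMap : MvPolynomial (Fin 2) R →ₗ[R] (Fin p × Fin q → R) :=
  (basisMonomials (Fin 2) R).constr R fun s => normalForm R p q (s 0) (s 1)

theorem normalFormMap_X_pow_mul_X_pow (a b : ℕ) :
    normalFormMap R p q (X 0 ^ a * X 1 ^ b) = normalForm R p q a b := by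
  have h := (basisMonomials (Fin 2) R).constr_basis R
    (fun s => normalForm R p q (s 0) (s 1)) (Finsupp.single 0 a + Finsupp.single 1 b)
  simpa [normalFormMap, monomial_eq_C_mul_X_pow_mul_X_pow] using h

theorem normalFormMap_natCast_mul (n : ℕ) (g : MvPolynomial (Fin 2) R) :
    normalFormMap R p q (n * g) = (n : R) • normalFormMap R p q g := by
  rw [← nsmul_eq_mul, map_nsmul, Nat.cast_smul_eq_nsmul]

theorem normalFormMap_mul_partialX (hp : 2 ≤ p) (hq : 2 ≤ q) (g : MvPolynomial (Fin 2) R) :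
    normalFormMap R p q (g * partialX R p q) = 0 := by
  refine linearMap_mul_eq_zero_of_monomial_mul _ (fun s => ?_) g
  rw [monomial_eq_C_mul_X_pow_mul_X_pow, C_1, one_mul,
    show X 0 ^ s 0 * X 1 ^ s 1 * partialX R p q = (p : MvPolynomial (Fin 2) R) *
      (X 0 ^ (s 0 + (p - 1)) * X 1 ^ (s 1 + 1)) + X 0 ^ s 0 * X 1 ^ (s 1 + q) by
        rw [partialX]; ring,
    map_add, normalFormMap_natCast_mul, normalFormMap_X_pow_mul_X_pow,
    normalFormMap_X_pow_mul_X_pow, normalForm_dx hp hq]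

theorem normalFormMap_mul_partialY (hp : 2 ≤ p) (hq : 2 ≤ q) (g : MvPolynomial (Fin 2) R) :
    normalFormMap R p q (g * partialY R p q) = 0 := by
  refine linearMap_mul_eq_zero_of_monomial_mul _ (fun s => ?_) g
  rw [monomial_eq_C_mul_X_pow_mul_X_pow, C_1, one_mul,
    show X 0 ^ s 0 * X 1 ^ s 1 * partialY R p q = X 0 ^ (s 0 + p) * X 1 ^ s 1 +
      (q : MvPolynomial (Fin 2) R) * (X 0 ^ (s 0 + 1) * X 1 ^ (s 1 + (q - 1))) by
        rw [partialY]; ring,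
    map_add, normalFormMap_natCast_mul, normalFormMap_X_pow_mul_X_pow,
    normalFormMap_X_pow_mul_X_pow, normalForm_dy hp hq]

theorem normalFormMap_eq_zero_of_mem (hp : 2 ≤ p) (hq : 2 ≤ q) {g : MvPolynomial (Fin 2) R}
    (hg : g ∈ jacobianIdeal R p q) : normalFormMap R p q g = 0 := by
  obtain ⟨u, v, rfl⟩ := Ideal.mem_span_pair.mp hg
  rw [map_add, normalFormMap_mul_partialX hp hq, normalFormMap_mul_partialY hp hq, add_zero]

variable (R) in
noncomputable def normalFormQuotient (hp : 2 ≤ p) (hq : 2 ≤ q) :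
    (MvPolynomial (Fin 2) R ⧸ jacobianIdeal R p q) →ₗ[R] (Fin p × Fin q → R) :=
  ((jacobianIdeal R p q).restrictScalars R).liftQ (normalFormMap R p q)
      (fun _ hg => normalFormMap_eq_zero_of_mem hp hq hg) ∘ₗ
    (Submodule.Quotient.restrictScalarsEquiv R (jacobianIdeal R p q)).symm.toLinearMap

theorem normalFormQuotient_mk (hp : 2 ≤ p) (hq : 2 ≤ q) (g : MvPolynomial (Fin 2) R) :
    normalFormQuotient R hp hq (Ideal.Quotient.mk _ g) = normalFormMap R p q g :=
  rfl

theorem linearIndependent_rectMonomial (hp : 2 ≤ p) (hq : 2 ≤ q) :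
    LinearIndependent R (rectMonomial p q (Ideal.Quotient.mk (jacobianIdeal R p q) (X 0))
      (Ideal.Quotient.mk (jacobianIdeal R p q) (X 1))) := by
  refine LinearIndependent.of_comp (normalFormQuotient R hp hq) ?_
  convert (Pi.basisFun R (Fin p × Fin q)).linearIndependent using 1
  funext ij
  rw [Function.comp_apply, rectMonomial, ← map_pow, ← map_pow, ← map_mul,
    normalFormQuotient_mk, normalFormMap_X_pow_mul_X_pow, normalForm_coe, Pi.basisFun_apply]

end Polynomial

theorem finrank_quotient_jacobianIdeal {K : Type*} [Field K] {p q : ℕ} (hp : 2 ≤ p)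
    (hq : 2 ≤ q) (hpq : (p * q : K) ≠ 1) :
    Module.finrank K (MvPolynomial (Fin 2) K ⧸ jacobianIdeal K p q) = p * q := by
  rw [Module.finrank_eq_card_basis (Module.Basis.mk (linearIndependent_rectMonomial hp hq)
      (span_rectMonomial_eq_top K hp hq (sub_ne_zero.mpr hpq.symm).isUnit).ge),
    Fintype.card_prod, Fintype.card_fin, Fintype.card_fin]

end LoopPolynomial

/-- The Milnor number of the loop polynomial `w = x^p y + x y^q` is `pq`:
the complex vector space `ℂ[x,y]/(∂w/∂x, ∂w/∂y)` has dimension `pq`, where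
`∂w/∂x = p x^(p-1) y + y^q` and `∂w/∂y = x^p + q x y^(q-1)`. -/
theorem milnor_number_loop (p q : ℕ) (hp : 2 ≤ p) (hq : 2 ≤ q) :
    Module.finrank ℂ
      (MvPolynomial (Fin 2) ℂ ⧸
        Ideal.span {(p : MvPolynomial (Fin 2) ℂ) * X 0 ^ (p - 1) * X 1 + X 1 ^ q,
                    X 0 ^ p + (q : MvPolynomial (Fin 2) ℂ) * X 0 * X 1 ^ (q - 1)}) = p * q :=
  LoopPolynomial.finrank_quotient_jacobianIdeal hp hq
    (by exact_mod_cast (by nlinarith : p * q ≠ 1))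
end

section
/- Let ℓ divide p-1 and q-1, let 0 ≤ k ≤ ℓ-1, and let D be the (k+2)×(k+2) matrix over ℂ[x,y] with D_{1,1} = y^{j-k(q-1)/ℓ}, D_{1,k+2} = x^{p-i+(ℓ-1-k)(p-1)/ℓ} y, D_{t+1,t} = -x^{(p-1)/ℓ} and D_{t,t} = y^{(q-1)/ℓ} for 2 ≤ t ≤ k+1 (subdiagonal/diagonal pattern), D_{k+2,k+1} = -x^{i-(ℓ-1)(p-1)/ℓ}, D_{k+2,k+2} = x y^{q-j}, and all other entries 0. Then det D = x^p y + x y^q. In particular D · adj(D) = (x^p y + x y^q) · Id, so (D, adj(D)) is a matrix factorisation of the loop polynomial. -/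
/-!
`D` is a cyclic lower-bidiagonal matrix: diagonal `y^(j-kb), y^b, …, y^b, x y^(q-j)`,
subdiagonal `-x^a, …, -x^a, -x^c` and corner entry `x^(p-i+(ℓ-1-k)a) y`, where `a = (p-1)/ℓ`,
`b = (q-1)/ℓ`, `c = i-(ℓ-1)a`. Expanding along the first row leaves two triangular minors, so
the determinant is the product of the diagonal plus the corner times the product of the
subdiagonal, the signs cancelling. The exponents then add up to `q` and `p` because
`k b ≤ j - 1` (as `k ≤ (j-1)ℓ/(q-1)` and `b ≤ (q-1)/ℓ`) and `ℓ a ≤ p - 1`.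
-/

open MvPolynomial

namespace Matrix

variable {R : Type*} [CommRing R] (k : ℕ) (α β d e γ δ : R)

def cyclicBidiagonal : Matrix (Fin (k + 2)) (Fin (k + 2)) R :=
  Matrix.of fun s t : Fin (k + 2) =>
    if (s : ℕ) = 0 ∧ (t : ℕ) = 0 then α
    else if (s : ℕ) = 0 ∧ (t : ℕ) = k + 1 then β
    else if (s : ℕ) = (t : ℕ) ∧ 1 ≤ (s : ℕ) ∧ (s : ℕ) ≤ k then d
    else if (s : ℕ) = (t : ℕ) + 1 ∧ (s : ℕ) ≤ k then e
    else if (s : ℕ) = k + 1 ∧ (t : ℕ) = k then γ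
    else if (s : ℕ) = k + 1 ∧ (t : ℕ) = k + 1 then δ
    else 0

theorem cyclicBidiagonal_zero_apply {t : Fin (k + 2)} (h0 : t ≠ 0)
    (hlast : t ≠ Fin.last (k + 1)) :
    cyclicBidiagonal k α β d e γ δ 0 t = 0 := by
  rw [Ne, Fin.ext_iff, Fin.val_zero] at h0
  rw [Ne, Fin.ext_iff, Fin.val_last] at hlast
  simp only [cyclicBidiagonal, of_apply]
  split_ifs <;> simp_all

theorem det_cyclicBidiagonal_submatrix_succ_succ :
    ((cyclicBidiagonal k α β d e γ δ).submatrix Fin.succ Fin.succ).det = d ^ k * δ := by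
  rw [det_of_isLowerTriangular]
  · simp [Fin.prod_univ_castSucc, cyclicBidiagonal]
  · intro s t hst
    have hst : (s : ℕ) < t := hst
    simp only [cyclicBidiagonal, submatrix_apply, of_apply]
    split_ifs <;> simp_all <;> omega

theorem det_cyclicBidiagonal_submatrix_succ_castSucc :
    ((cyclicBidiagonal k α β d e γ δ).submatrix Fin.succ Fin.castSucc).det = e ^ k * γ := by
  rw [det_of_isUpperTriangular]
  · simp [Fin.prod_univ_castSucc, cyclicBidiagonal]
  · intro s t hst
    have hst : (t : ℕ) < s := hst
    simp only [cyclicBidiagonal, submatrix_apply, of_apply]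
    split_ifs <;> simp_all <;> omega

theorem det_cyclicBidiagonal :
    (cyclicBidiagonal k α β d e γ δ).det =
      α * (d ^ k * δ) + (-1) ^ (k + 1) * β * (e ^ k * γ) := by
  rw [det_succ_row_zero, Fintype.sum_eq_add 0 (Fin.last (k + 1)) (Fin.ext_iff.not.2 (by simp))]
  · rw [Fin.succAbove_zero, Fin.succAbove_last, det_cyclicBidiagonal_submatrix_succ_succ,
      det_cyclicBidiagonal_submatrix_succ_castSucc]
    simp [cyclicBidiagonal]
  · intro t ⟨h0, hlast⟩
    rw [cyclicBidiagonal_zero_apply k α β d e γ δ h0 hlast, mul_zero, zero_mul]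

theorem det_cyclicBidiagonal_neg :
    (cyclicBidiagonal k α β d (-e) (-γ) δ).det = α * d ^ k * δ + β * e ^ k * γ := by
  have hsign : ((-1 : R) ^ (k + 1)) * (-1) ^ (k + 1) = 1 := by
    rw [← mul_pow, neg_one_mul, neg_neg, one_pow]
  rw [det_cyclicBidiagonal, neg_pow]
  linear_combination (β * e ^ k * γ) * hsign

end Matrix

theorem Nat.mul_div_mul_div_le (n ℓ m : ℕ) : n * ℓ / m * (m / ℓ) ≤ n :=
  (Nat.div_mul_div_le _ _ _ _).trans <| Nat.div_le_of_le_mul <| le_of_eq <| by ring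

theorem loop_y_exponents_add {q ℓ j k : ℕ} (hj2 : j ≤ q - 1)
    (hk : k = (j - 1) * ℓ / (q - 1)) :
    j - k * ((q - 1) / ℓ) + k * ((q - 1) / ℓ) + (q - j) = q := by
  have hkb : k * ((q - 1) / ℓ) ≤ j - 1 := hk ▸ Nat.mul_div_mul_div_le _ _ _
  omega

theorem loop_x_exponents_add {p ℓ i k : ℕ} (hi1 : p - (p - 1) / ℓ ≤ i) (hi2 : i ≤ p - 1)
    (hkℓ : k ≤ ℓ - 1) :
    p - i + (ℓ - 1 - k) * ((p - 1) / ℓ) + k * ((p - 1) / ℓ) + (i - (ℓ - 1) * ((p - 1) / ℓ)) =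
      p := by
  have hℓa := Nat.mul_div_le (p - 1) ℓ
  have hsub := Nat.sub_one_mul ℓ ((p - 1) / ℓ)
  have hsplit :
      (ℓ - 1 - k) * ((p - 1) / ℓ) + k * ((p - 1) / ℓ) = (ℓ - 1) * ((p - 1) / ℓ) := by
    rw [← add_mul, Nat.sub_add_cancel hkℓ]
  omega

theorem loop_matrix_factorisation_det_general (p q ℓ i j k : ℕ)
    (hi1 : p - (p - 1) / ℓ ≤ i) (hi2 : i ≤ p - 1) (hj2 : j ≤ q - 1)
    (hk : k = (j - 1) * ℓ / (q - 1)) (hkℓ : k ≤ ℓ - 1)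
    (D : Matrix (Fin (k + 2)) (Fin (k + 2)) (MvPolynomial (Fin 2) ℂ))
    (hD : D = Matrix.of fun s t : Fin (k + 2) =>
      if (s : ℕ) = 0 ∧ (t : ℕ) = 0 then (X 1 : MvPolynomial (Fin 2) ℂ) ^ (j - k * ((q - 1) / ℓ))
      else if (s : ℕ) = 0 ∧ (t : ℕ) = k + 1 then
        X 0 ^ (p - i + (ℓ - 1 - k) * ((p - 1) / ℓ)) * X 1
      else if (s : ℕ) = (t : ℕ) ∧ 1 ≤ (s : ℕ) ∧ (s : ℕ) ≤ k then X 1 ^ ((q - 1) / ℓ)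
      else if (s : ℕ) = (t : ℕ) + 1 ∧ (s : ℕ) ≤ k then -(X 0 ^ ((p - 1) / ℓ))
      else if (s : ℕ) = k + 1 ∧ (t : ℕ) = k then -(X 0 ^ (i - (ℓ - 1) * ((p - 1) / ℓ)))
      else if (s : ℕ) = k + 1 ∧ (t : ℕ) = k + 1 then X 0 * X 1 ^ (q - j)
      else 0) :
    D.det = X 0 ^ p * X 1 + X 0 * X 1 ^ q ∧
    D * D.adjugate = ((X 0 ^ p * X 1 + X 0 * X 1 ^ q : MvPolynomial (Fin 2) ℂ)) • (1 : Matrix (Fin (k + 2)) (Fin (k + 2)) (MvPolynomial (Fin 2) ℂ)) := by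
  have hD : D = Matrix.cyclicBidiagonal k (X 1 ^ (j - k * ((q - 1) / ℓ)))
      (X 0 ^ (p - i + (ℓ - 1 - k) * ((p - 1) / ℓ)) * X 1) (X 1 ^ ((q - 1) / ℓ))
      (-(X 0 ^ ((p - 1) / ℓ))) (-(X 0 ^ (i - (ℓ - 1) * ((p - 1) / ℓ)))) (X 0 * X 1 ^ (q - j)) :=
    hD
  have hdet : D.det = X 0 ^ p * X 1 + X 0 * X 1 ^ q := by
    rw [hD, Matrix.det_cyclicBidiagonal_neg]
    conv_rhs =>
      rw [← loop_x_exponents_add hi1 hi2 hkℓ, ← loop_y_exponents_add hj2 hk]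
    ring
  exact ⟨hdet, by rw [Matrix.mul_adjugate, hdet]⟩

/-- The matrix `D` (the even differential of the matrix factorisation `K_{0,i,j}` of the
loop polynomial) has determinant `x^p y + x y^q`; in particular
`D ⬝ adj(D) = (x^p y + x y^q) • 1`, so `(D, adj D)` is a matrix factorisation. -/
theorem loop_matrix_factorisation_det (p q ℓ i j k : ℕ) (hp : 2 ≤ p) (hq : 2 ≤ q)
    (hℓ : 1 ≤ ℓ) (hℓp : ℓ ∣ p - 1) (hℓq : ℓ ∣ q - 1)
    (hi1 : p - (p - 1) / ℓ ≤ i) (hi2 : i ≤ p - 1) (hj1 : 1 ≤ j) (hj2 : j ≤ q - 1)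
    (hk : k = (j - 1) * ℓ / (q - 1)) (hkℓ : k ≤ ℓ - 1)
    (D : Matrix (Fin (k + 2)) (Fin (k + 2)) (MvPolynomial (Fin 2) ℂ))
    (hD : D = Matrix.of fun s t : Fin (k + 2) =>
      if (s : ℕ) = 0 ∧ (t : ℕ) = 0 then (X 1 : MvPolynomial (Fin 2) ℂ) ^ (j - k * ((q - 1) / ℓ))
      else if (s : ℕ) = 0 ∧ (t : ℕ) = k + 1 then
        X 0 ^ (p - i + (ℓ - 1 - k) * ((p - 1) / ℓ)) * X 1
      else if (s : ℕ) = (t : ℕ) ∧ 1 ≤ (s : ℕ) ∧ (s : ℕ) ≤ k then X 1 ^ ((q - 1) / ℓ)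
      else if (s : ℕ) = (t : ℕ) + 1 ∧ (s : ℕ) ≤ k then -(X 0 ^ ((p - 1) / ℓ))
      else if (s : ℕ) = k + 1 ∧ (t : ℕ) = k then -(X 0 ^ (i - (ℓ - 1) * ((p - 1) / ℓ)))
      else if (s : ℕ) = k + 1 ∧ (t : ℕ) = k + 1 then X 0 * X 1 ^ (q - j)
      else 0) :
    D.det = X 0 ^ p * X 1 + X 0 * X 1 ^ q ∧
    D * D.adjugate = ((X 0 ^ p * X 1 + X 0 * X 1 ^ q : MvPolynomial (Fin 2) ℂ)) • (1 : Matrix (Fin (k + 2)) (Fin (k + 2)) (MvPolynomial (Fin 2) ℂ)) :=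
  loop_matrix_factorisation_det_general p q ℓ i j k hi1 hi2 hj2 hk hkℓ D hD
end

section
/- With D the (k+2)×(k+2) matrix of the previous statement, let ζ = e^{πi/ℓ} η^r (an ℓ-th root of -1) and let v be the column vector (y^{(k+1)(q-1)/ℓ - j}, ζ^{-1}, ζ^{-2}, ..., ζ^{-k}, ζ^{-(k+1)} x^{p-1-i})^T. Then every entry of the vector Dᵀ v is divisible in ℂ[x,y] by w_r = x^{(p-1)/ℓ} - ζ y^{(q-1)/ℓ}. -/
open MvPolynomial

/-!
Put `a = (p-1)/ℓ`, `b = (q-1)/ℓ` and `w = x^a - ζ y^b`. For `s ≤ k` only the diagonal and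
subdiagonal entries of column `s` of `D` meet `v`, and they contribute
`ζ^{-s} y^b - ζ^{-(s+1)} x^a = -ζ^{-(s+1)} w`; the corner exponents of `D` and `v` are exactly
those making this hold also for `s = 0` and `s = k`, which is where `k b < j ≤ (k+1) b` enters.
The last column gives `x^{p-i} y^{(k+1)b-j+1} (x^{ma} + ζ^{-(k+1)} y^{mb})` with `m = ℓ-1-k`,
and as `ζ^ℓ = -1` the last factor is `x^{ma} - (ζ y^b)^m`, a multiple of `w`.
-/

theorem Complex.exp_pi_mul_I_div_mul_exp_two_pi_mul_I_div_pow_pow_self {ℓ : ℕ} (hℓ : ℓ ≠ 0)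
    (r : ℕ) :
    (Complex.exp ((Real.pi : ℂ) * Complex.I / ℓ) *
      Complex.exp (2 * (Real.pi : ℂ) * Complex.I / ℓ) ^ r) ^ ℓ = -1 := by
  rw [mul_pow, ← pow_mul, mul_comm r, pow_mul, (Complex.isPrimitiveRoot_exp ℓ hℓ).pow_eq_one,
    one_pow, mul_one, ← Complex.exp_nat_mul, mul_div_cancel₀ _ (Nat.cast_ne_zero.mpr hℓ),
    Complex.exp_pi_mul_I]

section CommRing

variable {R : Type*} [CommRing R] {z z' A B : R}

theorem sub_mul_dvd_pow_mul_sub_pow_succ_mul (h : z * z' = 1) (n : ℕ) :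
    A - z * B ∣ z' ^ n * B - z' ^ (n + 1) * A :=
  ⟨-z' ^ (n + 1), by linear_combination (-z' ^ n * B) * h⟩

theorem sub_mul_dvd_pow_add_pow_mul_pow (h : z * z' = 1) {m n : ℕ} (hz : z ^ (m + n) = -1) :
    A - z * B ∣ A ^ m + z' ^ n * B ^ m := by
  have hzz' : (z * z') ^ n = 1 := by rw [h, one_pow]
  have hz' : z' ^ n = -z ^ m := by linear_combination z' ^ n * hz - z ^ m * hzz'
  rw [hz']
  convert sub_dvd_pow_sub_pow A (z * B) m using 1
  ring

end CommRing

theorem Matrix.transpose_mulVec_apply_eq_add {n R : Type*} [Fintype n] [CommSemiring R]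
    (D : Matrix n n R) (v : n → R) {s t₁ t₂ : n} (ht : t₁ ≠ t₂)
    (hD : ∀ t, t ≠ t₁ ∧ t ≠ t₂ → D t s = 0) :
    D.transpose.mulVec v s = D t₁ s * v t₁ + D t₂ s * v t₂ := by
  simp only [Matrix.mulVec, dotProduct, Matrix.transpose_apply]
  exact Fintype.sum_eq_add t₁ t₂ ht fun t ht' => by rw [hD t ht', zero_mul]

theorem Nat.bounds_of_eq_sub_one_mul_div {ℓ b j k : ℕ} (hℓ : 0 < ℓ) (hj : 1 ≤ j)
    (hjb : j ≤ ℓ * b) (hk : k = (j - 1) * ℓ / (ℓ * b)) :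
    k * b < j ∧ j ≤ (k + 1) * b ∧ k < ℓ := by
  have hb : 0 < b := Nat.pos_of_ne_zero fun h => by rw [h, mul_zero] at hjb; omega
  rw [mul_comm ℓ, Nat.mul_div_mul_right _ _ hℓ] at hk
  subst hk
  have hlo := Nat.div_mul_le_self (j - 1) b
  have hhi := Nat.lt_div_mul_add (a := j - 1) hb
  refine ⟨by omega, by rw [add_one_mul]; omega, ?_⟩
  rw [Nat.div_lt_iff_lt_mul hb]
  omega

noncomputable section EvenDifferential

open Matrix

variable {K : Type*} [Field K]

def evenDifferential (ℓ p q i j k a b : ℕ) :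
    Matrix (Fin (k + 2)) (Fin (k + 2)) (MvPolynomial (Fin 2) K) :=
  Matrix.of fun s t : Fin (k + 2) =>
    if (s : ℕ) = 0 ∧ (t : ℕ) = 0 then X 1 ^ (j - k * b)
    else if (s : ℕ) = 0 ∧ (t : ℕ) = k + 1 then X 0 ^ (p - i + (ℓ - 1 - k) * a) * X 1
    else if (s : ℕ) = (t : ℕ) ∧ 1 ≤ (s : ℕ) ∧ (s : ℕ) ≤ k then X 1 ^ b
    else if (s : ℕ) = (t : ℕ) + 1 ∧ (s : ℕ) ≤ k then -(X 0 ^ a)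
    else if (s : ℕ) = k + 1 ∧ (t : ℕ) = k then -(X 0 ^ (i - (ℓ - 1) * a))
    else if (s : ℕ) = k + 1 ∧ (t : ℕ) = k + 1 then X 0 * X 1 ^ (q - j)
    else 0

def morphismVector (p i j k b : ℕ) (ζ : K) : Fin (k + 2) → MvPolynomial (Fin 2) K :=
  fun s =>
    if (s : ℕ) = 0 then X 1 ^ ((k + 1) * b - j)
    else if (s : ℕ) = k + 1 then C (ζ⁻¹ ^ (k + 1)) * X 0 ^ (p - 1 - i)
    else C (ζ⁻¹ ^ (s : ℕ))

variable {ℓ p q i j k a b : ℕ} (ζ : K)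

theorem evenDifferential_transpose_mulVec_morphismVector_of_le {s : Fin (k + 2)} (hs : (s : ℕ) ≤ k)
    (hkj : k * b ≤ j) (hjk : j ≤ (k + 1) * b) (hi : (ℓ - 1) * a ≤ i) (hi' : i < p)
    (hpa : p = (ℓ - 1) * a + a + 1) :
    ((evenDifferential ℓ p q i j k a b)ᵀ *ᵥ morphismVector p i j k b ζ) s =
      C ζ⁻¹ ^ (s : ℕ) * X 1 ^ b - C ζ⁻¹ ^ ((s : ℕ) + 1) * X 0 ^ a := by
  obtain ⟨t, ht⟩ : ∃ t : Fin (k + 2), (t : ℕ) = s + 1 := ⟨⟨s + 1, by omega⟩, rfl⟩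
  have hkb := add_one_mul k b
  rw [transpose_mulVec_apply_eq_add _ _ (t₁ := s) (t₂ := t) (by simp [Fin.ext_iff, ht])
    fun u hu => ?_]
  · have hdiag : evenDifferential ℓ p q i j k a b s s * morphismVector p i j k b ζ s =
        C ζ⁻¹ ^ (s : ℕ) * X 1 ^ b := by
      by_cases hs0 : (s : ℕ) = 0
      · simp (disch := omega) only [evenDifferential, morphismVector, of_apply, if_neg,
          and_self, hs0, if_true, pow_zero, map_one, one_mul, ← pow_add]
        congr 1; omega
      · simp (disch := omega) only [evenDifferential, morphismVector, of_apply, if_pos, if_neg,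
          and_self, true_and, map_pow]
        ring
    have hsub : evenDifferential ℓ p q i j k a b t s * morphismVector p i j k b ζ t =
        -(C ζ⁻¹ ^ ((s : ℕ) + 1) * X 0 ^ a) := by
      by_cases hsk : (s : ℕ) = k
      · simp (disch := omega) only [evenDifferential, morphismVector, of_apply, if_pos, if_neg,
          and_true, hsk, map_pow]
        rw [show (X 0 : MvPolynomial (Fin 2) K) ^ a = X 0 ^ (i - (ℓ - 1) * a) * X 0 ^ (p - 1 - i) by
          rw [← pow_add]; congr 1; omega]
        ring
      · simp (disch := omega) only [evenDifferential, morphismVector, of_apply, if_pos, if_neg,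
          true_and, ht, map_pow]
        ring
    rw [hdiag, hsub, sub_eq_add_neg]
  · simp only [ne_eq, Fin.ext_iff, ht] at hu
    simp only [evenDifferential, of_apply]
    split_ifs <;> first | omega | rfl

theorem evenDifferential_transpose_mulVec_morphismVector_last {s : Fin (k + 2)}
    (hs : (s : ℕ) = k + 1) (hjk : j ≤ (k + 1) * b) (hkℓ : k < ℓ) (hi : i < p)
    (hqb : q = ℓ * b + 1) :
    ((evenDifferential ℓ p q i j k a b)ᵀ *ᵥ morphismVector p i j k b ζ) s =
      X 0 ^ (p - i) * X 1 ^ ((k + 1) * b - j + 1) *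
        ((X 0 ^ a) ^ (ℓ - 1 - k) + C ζ⁻¹ ^ (k + 1) * (X 1 ^ b) ^ (ℓ - 1 - k)) := by
  rw [transpose_mulVec_apply_eq_add _ _ (t₁ := 0) (t₂ := s) (by simp [Fin.ext_iff, hs])
    fun u hu => ?_]
  · simp (disch := omega) only [evenDifferential, morphismVector, of_apply, if_neg,
      and_self, and_true, true_and, if_true, hs, map_pow, Fin.val_zero]
    have hℓb : (k + 1) * b + (ℓ - 1 - k) * b = ℓ * b := by rw [← add_mul]; congr 1; omega
    rw [show q - j = (k + 1) * b - j + 1 + (ℓ - 1 - k) * b by omega,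
      show p - i = p - 1 - i + 1 by omega]
    ring
  · simp only [ne_eq, Fin.ext_iff, Fin.val_zero, hs] at hu
    simp only [evenDifferential, of_apply]
    split_ifs <;> first | omega | rfl

end EvenDifferential

theorem loop_morphism_to_Kwr_general (p q ℓ i j k r : ℕ) (hp : 2 ≤ p)
    (hℓ : 1 ≤ ℓ) (hℓp : ℓ ∣ p - 1) (hℓq : ℓ ∣ q - 1)
    (hi1 : p - (p - 1) / ℓ ≤ i) (hi2 : i ≤ p - 1) (hj1 : 1 ≤ j) (hj2 : j ≤ q - 1)
    (hk : k = (j - 1) * ℓ / (q - 1))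
    (ζ : ℂ)
    (hζ : ζ = Complex.exp ((Real.pi : ℂ) * Complex.I / (ℓ : ℂ)) *
      Complex.exp (2 * (Real.pi : ℂ) * Complex.I / (ℓ : ℂ)) ^ r)
    (D : Matrix (Fin (k + 2)) (Fin (k + 2)) (MvPolynomial (Fin 2) ℂ))
    (hD : D = Matrix.of fun s t : Fin (k + 2) =>
      if (s : ℕ) = 0 ∧ (t : ℕ) = 0 then (X 1 : MvPolynomial (Fin 2) ℂ) ^ (j - k * ((q - 1) / ℓ))
      else if (s : ℕ) = 0 ∧ (t : ℕ) = k + 1 then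
        X 0 ^ (p - i + (ℓ - 1 - k) * ((p - 1) / ℓ)) * X 1
      else if (s : ℕ) = (t : ℕ) ∧ 1 ≤ (s : ℕ) ∧ (s : ℕ) ≤ k then X 1 ^ ((q - 1) / ℓ)
      else if (s : ℕ) = (t : ℕ) + 1 ∧ (s : ℕ) ≤ k then -(X 0 ^ ((p - 1) / ℓ))
      else if (s : ℕ) = k + 1 ∧ (t : ℕ) = k then -(X 0 ^ (i - (ℓ - 1) * ((p - 1) / ℓ)))
      else if (s : ℕ) = k + 1 ∧ (t : ℕ) = k + 1 then X 0 * X 1 ^ (q - j)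
      else 0)
    (v : Fin (k + 2) → MvPolynomial (Fin 2) ℂ)
    (hv : v = fun s : Fin (k + 2) =>
      if (s : ℕ) = 0 then (X 1 : MvPolynomial (Fin 2) ℂ) ^ ((k + 1) * ((q - 1) / ℓ) - j)
      else if (s : ℕ) = k + 1 then C (ζ⁻¹ ^ (k + 1)) * X 0 ^ (p - 1 - i)
      else C (ζ⁻¹ ^ (s : ℕ))) :
    ∀ s : Fin (k + 2),
      ((X 0 : MvPolynomial (Fin 2) ℂ) ^ ((p - 1) / ℓ) - C ζ * X 1 ^ ((q - 1) / ℓ)) ∣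
        D.transpose.mulVec v s := by
  have hℓ0 : ℓ ≠ 0 := by omega
  set a := (p - 1) / ℓ
  set b := (q - 1) / ℓ
  have hpa : ℓ * a = p - 1 := Nat.mul_div_cancel' hℓp
  have hqb : ℓ * b = q - 1 := Nat.mul_div_cancel' hℓq
  have hℓa : (ℓ - 1) * a + a = ℓ * a := by
    rw [Nat.sub_one_mul, Nat.sub_add_cancel (Nat.le_mul_of_pos_left a hℓ)]
  obtain ⟨hkj, hjk, hkℓ⟩ := Nat.bounds_of_eq_sub_one_mul_div hℓ hj1 (by omega) (hqb ▸ hk)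
  have hζℓ : ζ ^ ℓ = -1 :=
    hζ ▸ Complex.exp_pi_mul_I_div_mul_exp_two_pi_mul_I_div_pow_pow_self hℓ0 r
  have hCζ : C ζ * C ζ⁻¹ = (1 : MvPolynomial (Fin 2) ℂ) := by
    rw [← C_mul, mul_inv_cancel₀ fun h => by simp [h, zero_pow hℓ0] at hζℓ, C_1]
  obtain rfl : D = evenDifferential ℓ p q i j k a b := hD
  obtain rfl : v = morphismVector p i j k b ζ := hv
  intro s
  obtain hs | hs : (s : ℕ) ≤ k ∨ (s : ℕ) = k + 1 := by omega
  · rw [evenDifferential_transpose_mulVec_morphismVector_of_le ζ hs hkj.le hjk (by omega) (by omega)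
      (by omega)]
    exact sub_mul_dvd_pow_mul_sub_pow_succ_mul hCζ _
  · rw [evenDifferential_transpose_mulVec_morphismVector_last ζ hs hjk hkℓ (by omega) (by omega)]
    refine Dvd.dvd.mul_left (sub_mul_dvd_pow_add_pow_mul_pow hCζ ?_) _
    rw [← map_pow, show ℓ - 1 - k + (k + 1) = ℓ by omega, hζℓ, map_neg, map_one]

/-- With `D` the even differential of `K_{0,i,j}`, `ζ = e^{πi/ℓ} η^r` an `ℓ`-th root of `-1`,
and `v = (y^{(k+1)(q-1)/ℓ - j}, ζ⁻¹, ζ⁻², …, ζ⁻ᵏ, ζ^{-(k+1)} x^{p-1-i})ᵀ`, every entry of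
`Dᵀ v` is divisible by `w_r = x^{(p-1)/ℓ} - ζ y^{(q-1)/ℓ}` in `ℂ[x,y]`. -/
theorem loop_morphism_to_Kwr (p q ℓ i j k r : ℕ) (hp : 2 ≤ p) (hq : 2 ≤ q)
    (hℓ : 1 ≤ ℓ) (hr1 : 1 ≤ r) (hr2 : r ≤ ℓ) (hℓp : ℓ ∣ p - 1) (hℓq : ℓ ∣ q - 1)
    (hi1 : p - (p - 1) / ℓ ≤ i) (hi2 : i ≤ p - 1) (hj1 : 1 ≤ j) (hj2 : j ≤ q - 1)
    (hk : k = (j - 1) * ℓ / (q - 1))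
    (ζ : ℂ)
    (hζ : ζ = Complex.exp ((Real.pi : ℂ) * Complex.I / (ℓ : ℂ)) *
      Complex.exp (2 * (Real.pi : ℂ) * Complex.I / (ℓ : ℂ)) ^ r)
    (D : Matrix (Fin (k + 2)) (Fin (k + 2)) (MvPolynomial (Fin 2) ℂ))
    (hD : D = Matrix.of fun s t : Fin (k + 2) =>
      if (s : ℕ) = 0 ∧ (t : ℕ) = 0 then (X 1 : MvPolynomial (Fin 2) ℂ) ^ (j - k * ((q - 1) / ℓ))
      else if (s : ℕ) = 0 ∧ (t : ℕ) = k + 1 then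
        X 0 ^ (p - i + (ℓ - 1 - k) * ((p - 1) / ℓ)) * X 1
      else if (s : ℕ) = (t : ℕ) ∧ 1 ≤ (s : ℕ) ∧ (s : ℕ) ≤ k then X 1 ^ ((q - 1) / ℓ)
      else if (s : ℕ) = (t : ℕ) + 1 ∧ (s : ℕ) ≤ k then -(X 0 ^ ((p - 1) / ℓ))
      else if (s : ℕ) = k + 1 ∧ (t : ℕ) = k then -(X 0 ^ (i - (ℓ - 1) * ((p - 1) / ℓ)))
      else if (s : ℕ) = k + 1 ∧ (t : ℕ) = k + 1 then X 0 * X 1 ^ (q - j)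
      else 0)
    (v : Fin (k + 2) → MvPolynomial (Fin 2) ℂ)
    (hv : v = fun s : Fin (k + 2) =>
      if (s : ℕ) = 0 then (X 1 : MvPolynomial (Fin 2) ℂ) ^ ((k + 1) * ((q - 1) / ℓ) - j)
      else if (s : ℕ) = k + 1 then C (ζ⁻¹ ^ (k + 1)) * X 0 ^ (p - 1 - i)
      else C (ζ⁻¹ ^ (s : ℕ))) :
    ∀ s : Fin (k + 2),
      ((X 0 : MvPolynomial (Fin 2) ℂ) ^ ((p - 1) / ℓ) - C ζ * X 1 ^ ((q - 1) / ℓ)) ∣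
        D.transpose.mulVec v s :=
  loop_morphism_to_Kwr_general p q ℓ i j k r hp hℓ hℓp hℓq hi1 hi2 hj1 hj2 hk ζ hζ D hD v hv
end

section
/- Let p, q ≥ 2 with (p,q) ≠ (2,2), and let ε ∈ ℂ, ε ≠ 0. Then the set of points (x,y) ∈ ℂ² with x ≠ 0 satisfying p x^{p-1} = ε y and q y^{q-1} = ε x has exactly (p-1)(q-1) - 1 elements. -/
/-!
Solving the first equation for `y = p x^{p-1} / ε` and substituting into the second turns it
into `q p^{q-1} x^{(p-1)(q-1)} = ε^q x`, that is `x^{(p-1)(q-1)-1} = ε^q / (q p^{q-1})` once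
`x ≠ 0`. So the critical points form the graph of a function over the roots of `x^n = c` with
`c ≠ 0`, and in characteristic zero such an equation has exactly `n` distinct roots.
-/

open Polynomial

theorem IsAlgClosed.ncard_setOf_pow_eq {K : Type*} [Field K] [IsAlgClosed K] {n : ℕ}
    (hn : (n : K) ≠ 0) {c : K} (hc : c ≠ 0) : {x : K | x ^ n = c}.ncard = n := by
  classical
  have : NeZero (n : K) := ⟨hn⟩
  have hn₀ : 0 < n := Nat.pos_of_ne_zero fun h ↦ hn (by simp [h])
  obtain ⟨ζ, hζ⟩ := HasEnoughRootsOfUnity.exists_primitiveRoot K n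
  have hroots : {x : K | x ^ n = c} = (nthRoots n c).toFinset := by
    ext x
    simp [mem_nthRoots hn₀]
  rw [hroots, Set.ncard_coe_finset, Multiset.toFinset_card_of_nodup (hζ.nthRoots_nodup hc),
    hζ.card_nthRoots, if_pos (IsAlgClosed.exists_pow_nat_eq c hn₀)]

namespace BrieskornPham

variable {K : Type*} [Field K] {p q : ℕ} {ε : K}

theorem second_eq_iff_pow_eq (hε : ε ≠ 0) (hp : (p : K) ≠ 0) (hq : (q : K) ≠ 0) {x : K}
    (hx : x ≠ 0) (hm : 1 ≤ (p - 1) * (q - 1)) :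
    (q : K) * (p * x ^ (p - 1) / ε) ^ (q - 1) = ε * x ↔
      x ^ ((p - 1) * (q - 1) - 1) = ε ^ q / (q * p ^ (q - 1)) := by
  obtain ⟨q, rfl⟩ : ∃ r, q = r + 1 := ⟨q - 1, by rcases q with _ | q <;> simp_all⟩
  obtain ⟨k, hk⟩ : ∃ k, (p - 1) * q = k + 1 := ⟨(p - 1) * q - 1, by simp at hm ⊢; omega⟩
  simp only [Nat.add_sub_cancel, hk]
  rw [div_pow, mul_pow, ← pow_mul, hk, ← mul_div_assoc, div_eq_iff (pow_ne_zero _ hε),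
    eq_div_iff (by positivity)]
  constructor
  · intro h
    apply mul_right_cancel₀ hx
    linear_combination h
  · intro h
    linear_combination x * h

theorem criticalSet_eq_image (hε : ε ≠ 0) (hp : (p : K) ≠ 0) (hq : (q : K) ≠ 0)
    (hm : 2 ≤ (p - 1) * (q - 1)) :
    {z : K × K | z.1 ≠ 0 ∧ (p : K) * z.1 ^ (p - 1) = ε * z.2 ∧
        (q : K) * z.2 ^ (q - 1) = ε * z.1} =
      (fun x ↦ (x, p * x ^ (p - 1) / ε)) ''
        {x | x ^ ((p - 1) * (q - 1) - 1) = ε ^ q / (q * p ^ (q - 1))} := by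
  have first_eq_iff {x y : K} : (p : K) * x ^ (p - 1) = ε * y ↔ p * x ^ (p - 1) / ε = y := by
    rw [div_eq_iff hε, mul_comm ε]
  ext ⟨x, y⟩
  simp only [Set.mem_ofPred_eq, Set.mem_image, Prod.mk.injEq, first_eq_iff]
  constructor
  · rintro ⟨hx, rfl, h⟩
    exact ⟨x, (second_eq_iff_pow_eq hε hp hq hx (by omega)).1 h, rfl, rfl⟩
  · rintro ⟨x, hroot, rfl, rfl⟩
    have hx : x ≠ 0 := by
      rintro rfl
      rw [zero_pow (by omega), eq_comm] at hroot
      exact div_ne_zero (pow_ne_zero _ hε) (by positivity) hroot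
    exact ⟨hx, rfl, (second_eq_iff_pow_eq hε hp hq hx (by omega)).2 hroot⟩

end BrieskornPham

/-- For `p, q ≥ 2` with `(p,q) ≠ (2,2)` and `ε ≠ 0`, the set of `(x,y) ∈ ℂ²` with `x ≠ 0`
satisfying `p x^{p-1} = ε y` and `q y^{q-1} = ε x` has exactly `(p-1)(q-1) - 1` elements. -/
theorem bp_morsification_critical_count (p q : ℕ) (hp : 2 ≤ p) (hq : 2 ≤ q)
    (hpq : (p, q) ≠ (2, 2)) (ε : ℂ) (hε : ε ≠ 0) :
    Set.ncard {z : ℂ × ℂ | z.1 ≠ 0 ∧ (p : ℂ) * z.1 ^ (p - 1) = ε * z.2 ∧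
        (q : ℂ) * z.2 ^ (q - 1) = ε * z.1} = (p - 1) * (q - 1) - 1 := by
  have hm : 2 ≤ (p - 1) * (q - 1) := by
    rcases Nat.lt_or_ge 2 p with hp' | hp'
    · exact Nat.mul_le_mul (by omega : 2 ≤ p - 1) (by omega : 1 ≤ q - 1)
    · have : q ≠ 2 := fun h ↦ hpq (by rw [h, show p = 2 by omega])
      exact Nat.mul_le_mul (by omega : 1 ≤ p - 1) (by omega : 2 ≤ q - 1)
  have hp₀ : (p : ℂ) ≠ 0 := by exact_mod_cast (by omega : p ≠ 0)
  have hq₀ : (q : ℂ) ≠ 0 := by exact_mod_cast (by omega : q ≠ 0)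
  rw [BrieskornPham.criticalSet_eq_image hε hp₀ hq₀ hm,
    Set.ncard_image_of_injective _ fun _ _ h ↦ congrArg Prod.fst h]
  exact IsAlgClosed.ncard_setOf_pow_eq (by exact_mod_cast (by omega))
    (div_ne_zero (pow_ne_zero _ hε) (by positivity))
end

section
/- Let p, q ≥ 2 with ℓ dividing gcd(p-1, q-1), and set ζ = e^{2πi/(p-1)}, η = e^{2πi/(q-1)}. For integers m, n define f_{m,n}^{(i)}: ℂ² → ℂ², (λ, μ) ↦ (ζ^{m(ℓ+1-i)} η^{n(1-i)} λ, ζ^{m(i-ℓ)} η^{in} μ). Then f_{m,n}^{(i)} intertwines the chart transition maps, i.e. whenever μ ≠ 0 and (λ', μ') = (μ^{-1}, μ²λ), one has f_{m,n}^{(i+1)}(λ', μ') = ((ζ^{m(i-ℓ)} η^{in} μ)^{-1}, (ζ^{m(i-ℓ)} η^{in} μ)² · ζ^{m(ℓ+1-i)} η^{n(1-i)} λ), and for each i the local Morsification satisfies w̃_i(f_{m,n}^{(i)}(λ,μ)) = ζ^m η^n · w̃_i(λ, μ), where w̃_i(λ,μ) = λμ(λ^{i(p-1)/ℓ} μ^{(i-1)(p-1)/ℓ}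 + λ^{(ℓ-i)(q-1)/ℓ} μ^{(ℓ+1-i)(q-1)/ℓ} - ε). -/
private lemma prod_zpow_pow (ζ η : ℂ) (α β : ℤ) (N : ℕ) :
    (ζ^α * η^β)^N = ζ^(α*N) * η^(β*N) := by
  rw [mul_pow, ← zpow_natCast (ζ^α), ← zpow_natCast (η^β), ← zpow_mul, ← zpow_mul]

private lemma pair_pow_eq_one {ζ η : ℂ} (hζ0 : ζ ≠ 0) (hη0 : η ≠ 0) {Dp Dq : ℤ}
    (hζD : ζ ^ Dp = 1) (hηD : η ^ Dq = 1) (α β γ δ : ℤ) (N M : ℕ) (s t : ℤ)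
    (hE1 : α*N + γ*M = Dp * s) (hE2 : β*N + δ*M = Dq * t) :
    (ζ^α*η^β)^N * (ζ^γ*η^δ)^M = 1 := by
  rw [prod_zpow_pow, prod_zpow_pow, mul_mul_mul_comm, ← zpow_add₀ hζ0, ← zpow_add₀ hη0,
    hE1, hE2, zpow_mul, zpow_mul, hζD, hηD, one_zpow, one_zpow, mul_one]

/-- The local Morsification `w̃_i` of the loop polynomial on the `i`-th chart of the
crepant resolution of the `A_{ℓ-1}` singularity. -/
noncomputable def loopChartMorsification (p q ℓ i : ℕ) (ε lam mu : ℂ) : ℂ :=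
  lam * mu *
    (lam ^ (i * ((p - 1) / ℓ)) * mu ^ ((i - 1) * ((p - 1) / ℓ)) +
      lam ^ ((ℓ - i) * ((q - 1) / ℓ)) * mu ^ ((ℓ + 1 - i) * ((q - 1) / ℓ)) - ε)

/-- With `ζ = e^{2πi/(p-1)}`, `η = e^{2πi/(q-1)}`, the maps
`f_{m,n}^{(i)}(λ,μ) = (ζ^{m(ℓ+1-i)} η^{n(1-i)} λ, ζ^{m(i-ℓ)} η^{in} μ)` intertwine the chart
transitions `(λ,μ) ↦ (μ⁻¹, μ²λ)`, and satisfy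
`w̃_i ∘ f_{m,n}^{(i)} = ζ^m η^n w̃_i`. -/
theorem loop_symmetry_of_resolution (p q ℓ : ℕ) (hp : 2 ≤ p) (hq : 2 ≤ q) (hℓ : 0 < ℓ)
    (h1 : ℓ ∣ p - 1) (h2 : ℓ ∣ q - 1) (m n : ℤ) (ε : ℂ) (ζ η : ℂ)
    (hζ : ζ = Complex.exp (2 * (Real.pi : ℂ) * Complex.I / ((p : ℂ) - 1)))
    (hη : η = Complex.exp (2 * (Real.pi : ℂ) * Complex.I / ((q : ℂ) - 1))) :
    (∀ i : ℕ, 1 ≤ i → i ≤ ℓ → ∀ lam mu : ℂ, mu ≠ 0 →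
      ∀ lam' mu' : ℂ, lam' = mu⁻¹ → mu' = mu ^ 2 * lam →
        (ζ ^ (m * ((ℓ : ℤ) + 1 - ((i : ℤ) + 1))) * η ^ (n * (1 - ((i : ℤ) + 1))) * lam',
          ζ ^ (m * (((i : ℤ) + 1) - (ℓ : ℤ))) * η ^ (n * ((i : ℤ) + 1)) * mu') =
        ((ζ ^ (m * ((i : ℤ) - (ℓ : ℤ))) * η ^ (n * (i : ℤ)) * mu)⁻¹,
          (ζ ^ (m * ((i : ℤ) - (ℓ : ℤ))) * η ^ (n * (i : ℤ)) * mu) ^ 2 *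
            (ζ ^ (m * ((ℓ : ℤ) + 1 - (i : ℤ))) * η ^ (n * (1 - (i : ℤ))) * lam))) ∧
    (∀ i : ℕ, 1 ≤ i → i ≤ ℓ → ∀ lam mu : ℂ,
      loopChartMorsification p q ℓ i ε
          (ζ ^ (m * ((ℓ : ℤ) + 1 - (i : ℤ))) * η ^ (n * (1 - (i : ℤ))) * lam)
          (ζ ^ (m * ((i : ℤ) - (ℓ : ℤ))) * η ^ (n * (i : ℤ)) * mu) =
        ζ ^ m * η ^ n * loopChartMorsification p q ℓ i ε lam mu) := by
  have hζ0 : ζ ≠ 0 := by rw [hζ]; exact Complex.exp_ne_zero _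
  have hη0 : η ≠ 0 := by rw [hη]; exact Complex.exp_ne_zero _
  -- roots of unity
  have hpc : ((p - 1 : ℕ) : ℂ) = (p : ℂ) - 1 := by
    push_cast [Nat.cast_sub (show 1 ≤ p by omega)]; ring
  have hqc : ((q - 1 : ℕ) : ℂ) = (q : ℂ) - 1 := by
    push_cast [Nat.cast_sub (show 1 ≤ q by omega)]; ring
  have hpne : ((p : ℂ) - 1) ≠ 0 := by
    rw [← hpc]; exact_mod_cast (show (p - 1 : ℕ) ≠ 0 by omega)
  have hqne : ((q : ℂ) - 1) ≠ 0 := by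
    rw [← hqc]; exact_mod_cast (show (q - 1 : ℕ) ≠ 0 by omega)
  have hζd : ζ ^ ((p - 1 : ℕ) : ℤ) = 1 := by
    rw [zpow_natCast, hζ, ← Complex.exp_nat_mul, hpc,
      show ((p : ℂ) - 1) * (2 * (Real.pi : ℂ) * Complex.I / ((p : ℂ) - 1)) =
        2 * (Real.pi : ℂ) * Complex.I by field_simp]
    exact Complex.exp_two_pi_mul_I
  have hηd : η ^ ((q - 1 : ℕ) : ℤ) = 1 := by
    rw [zpow_natCast, hη, ← Complex.exp_nat_mul, hqc,
      show ((q : ℂ) - 1) * (2 * (Real.pi : ℂ) * Complex.I / ((q : ℂ) - 1)) =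
        2 * (Real.pi : ℂ) * Complex.I by field_simp]
    exact Complex.exp_two_pi_mul_I
  obtain ⟨a, ha⟩ := h1
  obtain ⟨b, hb⟩ := h2
  have hda : (p - 1) / ℓ = a := by rw [ha]; exact Nat.mul_div_cancel_left a hℓ
  have hdb : (q - 1) / ℓ = b := by rw [hb]; exact Nat.mul_div_cancel_left b hℓ
  constructor
  · intro i hi1 hiℓ lam mu hmu lam' mu' hlam' hmu'
    subst hlam' hmu'
    refine Prod.ext ?_ ?_
    · show ζ ^ (m * ((ℓ : ℤ) + 1 - ((i : ℤ) + 1))) * η ^ (n * (1 - ((i : ℤ) + 1))) * mu⁻¹ = _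
      rw [show m * ((ℓ : ℤ) + 1 - ((i : ℤ) + 1)) = -(m * ((i : ℤ) - (ℓ : ℤ))) by ring,
        show n * (1 - ((i : ℤ) + 1)) = -(n * (i : ℤ)) by ring,
        zpow_neg, zpow_neg, mul_inv, mul_inv]
    · show ζ ^ (m * (((i : ℤ) + 1) - (ℓ : ℤ))) * η ^ (n * ((i : ℤ) + 1)) * (mu ^ 2 * lam) = _
      rw [show m * (((i : ℤ) + 1) - (ℓ : ℤ)) =
            m * ((i : ℤ) - (ℓ : ℤ)) + (m * ((i : ℤ) - (ℓ : ℤ)) + m * ((ℓ : ℤ) + 1 - (i : ℤ)))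
            by ring,
        show n * ((i : ℤ) + 1) = n * (i : ℤ) + (n * (i : ℤ) + n * (1 - (i : ℤ))) by ring,
        zpow_add₀ hζ0, zpow_add₀ hζ0, zpow_add₀ hη0, zpow_add₀ hη0, pow_two]
      ring
  · intro i hi1 hiℓ lam mu
    have hiℓ1 : i ≤ ℓ + 1 := hiℓ.trans (Nat.le_succ ℓ)
    have hAB : ζ ^ (m * ((ℓ : ℤ) + 1 - (i : ℤ))) * η ^ (n * (1 - (i : ℤ))) *
        (ζ ^ (m * ((i : ℤ) - (ℓ : ℤ))) * η ^ (n * (i : ℤ))) = ζ ^ m * η ^ n := by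
      rw [mul_mul_mul_comm, ← zpow_add₀ hζ0, ← zpow_add₀ hη0,
        show m * ((ℓ : ℤ) + 1 - (i : ℤ)) + m * ((i : ℤ) - (ℓ : ℤ)) = m by ring,
        show n * (1 - (i : ℤ)) + n * (i : ℤ) = n by ring]
    have hC1 : (ζ ^ (m * ((ℓ : ℤ) + 1 - (i : ℤ))) * η ^ (n * (1 - (i : ℤ)))) ^ (i * a) *
        (ζ ^ (m * ((i : ℤ) - (ℓ : ℤ))) * η ^ (n * (i : ℤ))) ^ ((i - 1) * a) = 1 := by
      refine pair_pow_eq_one hζ0 hη0 hζd hηd _ _ _ _ _ _ m 0 ?_ ?_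
      · rw [ha]; push_cast [Nat.cast_sub hi1]; ring
      · push_cast [Nat.cast_sub hi1]; ring
    have hC2 : (ζ ^ (m * ((ℓ : ℤ) + 1 - (i : ℤ))) * η ^ (n * (1 - (i : ℤ)))) ^ ((ℓ - i) * b) *
        (ζ ^ (m * ((i : ℤ) - (ℓ : ℤ))) * η ^ (n * (i : ℤ))) ^ ((ℓ + 1 - i) * b) = 1 := by
      refine pair_pow_eq_one hζ0 hη0 hζd hηd _ _ _ _ _ _ 0 n ?_ ?_
      · push_cast [Nat.cast_sub hiℓ, Nat.cast_sub hiℓ1]; ring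
      · rw [hb]; push_cast [Nat.cast_sub hiℓ, Nat.cast_sub hiℓ1]; ring
    simp only [loopChartMorsification, hda, hdb]
    linear_combination
      (lam * mu *
        ((ζ ^ (m * ((ℓ : ℤ) + 1 - (i : ℤ))) * η ^ (n * (1 - (i : ℤ)))) ^ (i * a) *
            (ζ ^ (m * ((i : ℤ) - (ℓ : ℤ))) * η ^ (n * (i : ℤ))) ^ ((i - 1) * a) *
            (lam ^ (i * a) * mu ^ ((i - 1) * a)) +
          (ζ ^ (m * ((ℓ : ℤ) + 1 - (i : ℤ))) * η ^ (n * (1 - (i : ℤ)))) ^ ((ℓ - i) * b) *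
            (ζ ^ (m * ((i : ℤ) - (ℓ : ℤ))) * η ^ (n * (i : ℤ))) ^ ((ℓ + 1 - i) * b) *
            (lam ^ ((ℓ - i) * b) * mu ^ ((ℓ + 1 - i) * b)) - ε)) * hAB +
      (lam * mu * (ζ ^ m * η ^ n) * (lam ^ (i * a) * mu ^ ((i - 1) * a))) * hC1 +
      (lam * mu * (ζ ^ m * η ^ n) * (lam ^ ((ℓ - i) * b) * mu ^ ((ℓ + 1 - i) * b))) * hC2
end
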